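/- arXiv:1405.2225 — 6 statements merged into one kernel-verified Lean document; each statement's English description precedes it below -/
import Mathlib

section
/- Let Σ be a split system on a finite set X with |X| ≥ 2. Then there exists a weak X-tree T with Σ(T) = Σ (equality of multisets) if and only if Σ is compatible. -/
open scoped Classical

/-- A weak X-tree: a finite tree together with a labelling map `lab : X → V`
such that every degree-one vertex (i.e. vertex with a unique neighbour) is labelled. -/
structure WeakXTree (X : Type) [Fintype X] [DecidableEq X] where
  V : Type
  [fintypeV : Fintype V]
  [decEqV : DecidableEq V]
  G : SimpleGraph V
  isTree : G.IsTree
  lab : X → V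
  leaf_labelled : ∀ v : V, (∃! w : V, G.Adj v w) → v ∈ Set.range lab

attribute [instance] WeakXTree.fintypeV WeakXTree.decEqV

variable {X : Type} [Fintype X] [DecidableEq X]

namespace WeakXTree

/-- A leaf is a vertex with a unique neighbour (degree one). -/
def IsLeaf (T : WeakXTree X) (v : T.V) : Prop := ∃! w : T.V, T.G.Adj v w

/-- The split of `X` displayed by an edge `e` of the tree: the (two) sets
`φ⁻¹(V₁)`, `φ⁻¹(V₂)` where `V₁, V₂` are the components of `T ∖ e`. -/
noncomputable def splitOf (T : WeakXTree X) (e : Sym2 T.V) : Finset (Finset X) :=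
  Finset.image (fun u : T.V =>
    Finset.univ.filter (fun x : X => (T.G.deleteEdges {e}).Reachable u (T.lab x)))
    Finset.univ

/-- The multiset of splits displayed by the edges of a weak X-tree. -/
noncomputable def splits (T : WeakXTree X) : Multiset (Finset (Finset X)) :=
  T.G.edgeFinset.val.map T.splitOf

end WeakXTree

/-- A partition of `X`: nonempty parts, every element of `X` in exactly one part. -/
def IsPartition (π : Finset (Finset X)) : Prop :=
  (∀ A ∈ π, A.Nonempty) ∧ ∀ x : X, ∃! A : Finset X, A ∈ π ∧ x ∈ A

/-- A split of `X` is a partition of `X` into exactly two parts. -/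
def IsSplit (σ : Finset (Finset X)) : Prop := IsPartition σ ∧ σ.card = 2

/-- A split system on `X` is a multiset of splits of `X`. -/
def IsSplitSystem (S : Multiset (Finset (Finset X))) : Prop := ∀ σ ∈ S, IsSplit σ

/-- Two splits `{A₁,B₁}` and `{A₂,B₂}` are compatible if one of the four
intersections of a part of one with a part of the other is empty. -/
def SplitsCompatible (σ₁ σ₂ : Finset (Finset X)) : Prop :=
  ∃ A ∈ σ₁, ∃ B ∈ σ₂, A ∩ B = ∅

/-- A split system is compatible if its splits are pairwise compatible. -/
def CompatibleSystem (S : Multiset (Finset (Finset X))) : Prop :=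
  ∀ σ₁ ∈ S, ∀ σ₂ ∈ S, SplitsCompatible σ₁ σ₂

/-- A partition system on `X`: a multiset of partitions of `X` into at least two parts. -/
def IsPartitionSystem (P : Multiset (Finset (Finset X))) : Prop :=
  ∀ π ∈ P, IsPartition π ∧ 2 ≤ π.card

/-- The multiset of splits `{A, X − A}` for `A` a part of the partition `π`. -/
def partitionSplits (π : Finset (Finset X)) : Multiset (Finset (Finset X)) :=
  π.val.map (fun A => ({A, Aᶜ} : Finset (Finset X)))

/-- `Σ_Π`: the multiset union over `π ∈ Π` of the splits `{A, X − A}`, `A ∈ π`. -/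
def systemSplits (P : Multiset (Finset (Finset X))) : Multiset (Finset (Finset X)) :=
  P.bind partitionSplits

/-- A partition system is strongly compatible if any two of its partitions are
equal or have parts whose union is `X`. -/
def StronglyCompatible (P : Multiset (Finset (Finset X))) : Prop :=
  ∀ π₁ ∈ P, ∀ π₂ ∈ P, π₁ = π₂ ∨ ∃ A ∈ π₁, ∃ B ∈ π₂, A ∪ B = Finset.univ

namespace WeakXTree

/-- A weak X-tree is even if all pairwise distances between labelled vertices are even. -/
def IsEven (T : WeakXTree X) : Prop :=
  ∀ x y : X, Even (T.G.dist (T.lab x) (T.lab y))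

/-- A vertex of a weak X-tree is even if it has even distance to some leaf. -/
def EvenVertex (T : WeakXTree X) (v : T.V) : Prop :=
  ∃ l : T.V, T.IsLeaf l ∧ Even (T.G.dist v l)

/-- A set `E` of edges of `T` displays the partition `π` if there is a bijection
`ξ : π → E` with `σ_{ξ(A)} = {A, X − A}` for each part `A ∈ π`. -/
def Displays (T : WeakXTree X) (E : Finset (Sym2 T.V)) (π : Finset (Finset X)) : Prop :=
  ↑E ⊆ T.G.edgeSet ∧ ∃ ξ : Finset X → Sym2 T.V,
    Set.BijOn ξ ↑π ↑E ∧ ∀ A ∈ π, T.splitOf (ξ A) = {A, Aᶜ}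

/-- The partition `π(v)` displayed by a vertex `v`: `x` and `y` are in the same
part iff the path from `φ(x)` to `φ(y)` does not pass through `v`. -/
noncomputable def vertexPartition (T : WeakXTree X) (v : T.V) : Finset (Finset X) :=
  Finset.image (fun x : X => Finset.univ.filter (fun y : X =>
    ∀ p : T.G.Walk (T.lab x) (T.lab y), p.IsPath → v ∉ p.support)) Finset.univ

end WeakXTree


/-!
The splits of a tree are compatible: given edges `e` and `f`, take an endpoint `b` of `f` on the
far side of `f` from `e`, then an endpoint `v` of `e` on the far side of `e` from `b`; the labels
reachable from `v` in `T ∖ e` and those reachable from `b` in `T ∖ f` are disjoint.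

Conversely, fix `r ∈ X` and replace each split of a compatible system by its part avoiding `r`.
These parts form a laminar family, and its Hasse diagram, with a root labelled `r` on top, is a
weak X-tree in which the edge below each part displays exactly the split it came from.
-/

lemma Multiset.exists_map_eq_of_forall_mem {α β : Type*} {f : β → α} {p : β → Prop}
    {s : Multiset α} (h : ∀ a ∈ s, ∃ b, f b = a ∧ p b) :
    ∃ t : Multiset β, t.map f = s ∧ ∀ b ∈ t, p b := by
  choose g hg using h
  refine ⟨s.attach.map fun a => g a.1 a.2, ?_, ?_⟩
  · rw [Multiset.map_map]
    conv_rhs => rw [← s.attach_map_val]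
    exact Multiset.map_congr rfl fun a _ => (hg a.1 a.2).1
  · simp only [Multiset.mem_map]
    rintro _ ⟨a, -, rfl⟩
    exact (hg a.1 a.2).2

namespace SimpleGraph

variable {V : Type*} {G : SimpleGraph V}

lemma Reachable.iff_of_forall_adj {P : V → Prop} (hP : ∀ ⦃u v⦄, G.Adj u v → (P u ↔ P v))
    {u v : V} (h : G.Reachable u v) : P u ↔ P v := by
  obtain ⟨p⟩ := h
  induction p with
  | nil => rfl
  | cons hadj _ ih => exact (hP hadj).trans ih

lemma reachable_of_forall_exists_adj_gt [Preorder V] [Finite V] {S : Set V} {t : V}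
    (h : ∀ u ∈ S, u ≠ t → ∃ w ∈ S, u < w ∧ G.Adj u w) {u : V} (hu : u ∈ S) :
    G.Reachable u t := by
  induction u using WellFoundedGT.induction with
  | _ u ih =>
    by_cases hut : u = t
    · exact hut ▸ .rfl
    obtain ⟨w, hw, huw, hadj⟩ := h u hu hut
    exact hadj.reachable.trans (ih w huw hw)

lemma reachable_deleteEdges_of_not_reachable {e f : Sym2 V} {u w y : V} (hu : u ∈ e)
    (hwu : ¬ (G.deleteEdges {f}).Reachable w u) (hwy : (G.deleteEdges {f}).Reachable w y) :
    (G.deleteEdges {e}).Reachable w y := by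
  obtain ⟨p⟩ := hwy
  have he : e ∉ p.edges := fun he =>
    hwu ⟨p.takeUntil u (p.fst_mem_support_of_mem_edges (Sym2.other_spec hu ▸ he))⟩
  exact ⟨(p.toDeleteEdge e he).mapLe (deleteEdges_mono (G.deleteEdges_le _))⟩

lemma IsAcyclic.exists_mem_not_reachable_deleteEdges (hG : G.IsAcyclic) {e : Sym2 V}
    (he : e ∈ G.edgeSet) (w : V) : ∃ v ∈ e, ¬ (G.deleteEdges {e}).Reachable w v := by
  induction e using Sym2.ind with
  | _ a b =>
    have hbridge := isBridge_iff.mp (isAcyclic_iff_forall_isBridge.mp hG he)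
    by_cases hwa : (G.deleteEdges {s(a, b)}).Reachable w a
    · exact ⟨b, Sym2.mem_mk_right a b, fun hwb => hbridge (hwa.symm.trans hwb)⟩
    · exact ⟨a, Sym2.mem_mk_left a b, hwa⟩

end SimpleGraph

namespace WeakXTree

lemma splitsCompatible_splitOf (T : WeakXTree X) {e f : Sym2 T.V}
    (he : e ∈ T.G.edgeSet) (hf : f ∈ T.G.edgeSet) :
    SplitsCompatible (T.splitOf e) (T.splitOf f) := by
  obtain ⟨u, hu⟩ : ∃ u, u ∈ e := e.ind fun a _ => ⟨a, Sym2.mem_mk_left _ _⟩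
  obtain ⟨b, -, hub⟩ := T.isTree.isAcyclic.exists_mem_not_reachable_deleteEdges hf u
  obtain ⟨v, -, hbv⟩ := T.isTree.isAcyclic.exists_mem_not_reachable_deleteEdges he b
  refine ⟨_, Finset.mem_image_of_mem _ (Finset.mem_univ v),
    _, Finset.mem_image_of_mem _ (Finset.mem_univ b), ?_⟩
  ext x
  simp only [Finset.mem_inter, Finset.mem_filter, Finset.mem_univ, true_and,
    Finset.notMem_empty, iff_false, not_and]
  intro hvx hbx
  exact hbv ((SimpleGraph.reachable_deleteEdges_of_not_reachable hu
    (fun h => hub h.symm) hbx).trans hvx.symm)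

lemma compatibleSystem_splits (T : WeakXTree X) : CompatibleSystem T.splits := by
  intro σ hσ τ hτ
  obtain ⟨e, he, rfl⟩ := Multiset.mem_map.mp hσ
  obtain ⟨f, hf, rfl⟩ := Multiset.mem_map.mp hτ
  exact T.splitsCompatible_splitOf (SimpleGraph.mem_edgeFinset.mp he)
    (SimpleGraph.mem_edgeFinset.mp hf)

end WeakXTree

lemma IsSplit.exists_eq_pair_compl {σ : Finset (Finset X)} (h : IsSplit σ) :
    ∃ B : Finset X, σ = {B, Bᶜ} ∧ B.Nonempty ∧ Bᶜ.Nonempty := by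
  obtain ⟨⟨hne, hcover⟩, hcard⟩ := h
  obtain ⟨a, b, hab, rfl⟩ := Finset.card_eq_two.mp hcard
  have hb : b = aᶜ := by
    ext x
    obtain ⟨C, ⟨hC, hxC⟩, huniq⟩ := hcover x
    simp only [Finset.mem_insert, Finset.mem_singleton] at hC huniq
    rw [Finset.mem_compl]
    refine ⟨fun hxb hxa => hab ((huniq a ⟨Or.inl rfl, hxa⟩).trans
      (huniq b ⟨Or.inr rfl, hxb⟩).symm), fun hxa => ?_⟩
    rcases hC with rfl | rfl
    · exact absurd hxC hxa
    · exact hxC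
  subst hb
  exact ⟨a, rfl, hne a (by simp), hne aᶜ (by simp)⟩

lemma IsSplit.exists_pair_compl_eq_notMem {σ : Finset (Finset X)} (h : IsSplit σ) (r : X) :
    ∃ B : Finset X, {B, Bᶜ} = σ ∧ r ∉ B ∧ B.Nonempty := by
  obtain ⟨B, rfl, hB, hBc⟩ := h.exists_eq_pair_compl
  by_cases hr : r ∈ B
  · exact ⟨Bᶜ, by rw [compl_compl, Finset.pair_comm], Finset.notMem_compl.mpr hr, hBc⟩
  · exact ⟨B, rfl, hr, hB⟩

lemma subset_or_subset_or_disjoint_of_splitsCompatible {B C : Finset X} {r : X}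
    (hB : r ∉ B) (hC : r ∉ C) (h : SplitsCompatible {B, Bᶜ} {C, Cᶜ}) :
    B ⊆ C ∨ C ⊆ B ∨ Disjoint B C := by
  obtain ⟨P, hP, Q, hQ, hPQ⟩ := h
  simp only [Finset.mem_insert, Finset.mem_singleton] at hP hQ
  rw [← Finset.disjoint_iff_inter_eq_empty] at hPQ
  rcases hP with rfl | rfl <;> rcases hQ with rfl | rfl
  · exact Or.inr (Or.inr hPQ)
  · exact Or.inl (disjoint_compl_right_iff.mp hPQ)
  · exact Or.inr (Or.inl (disjoint_compl_left_iff.mp hPQ))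
  · exact absurd (Finset.mem_compl.mpr hC) (Finset.disjoint_left.mp hPQ (Finset.mem_compl.mpr hB))

structure SortedLaminar {α ι : Type*} [LinearOrder ι] (A : ι → Finset α) : Prop where
  nonempty : ∀ i, (A i).Nonempty
  laminar : ∀ i j, A i ⊆ A j ∨ A j ⊆ A i ∨ Disjoint (A i) (A j)
  lt_of_ssubset : ∀ ⦃i j⦄, A i ⊂ A j → i < j

namespace SortedLaminar

section

variable {α ι : Type*} [LinearOrder ι] {A : ι → Finset α}

lemma subset_of_le (hA : SortedLaminar A) {i j : ι} {x : α} (hi : x ∈ A i) (hj : x ∈ A j)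
    (hij : i ≤ j) : A i ⊆ A j := by
  rcases hA.laminar i j with h | h | h
  · exact h
  · rcases h.eq_or_ssubset with h | h
    · exact h.ge
    · exact absurd (hA.lt_of_ssubset h) hij.not_gt
  · exact absurd hj (Finset.disjoint_left.mp h hi)

variable (A) in
def subtree (i : ι) : Set (WithTop ι) := {u | ∃ j : ι, u = j ∧ j ≤ i ∧ A j ⊆ A i}

@[simp] lemma coe_mem_subtree {i j : ι} :
    (j : WithTop ι) ∈ subtree A i ↔ j ≤ i ∧ A j ⊆ A i := by
  simp [subtree]

@[simp] lemma top_notMem_subtree (i : ι) : ⊤ ∉ subtree A i := by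
  simp [subtree]

variable [Fintype ι] (A)

/- The tree has a vertex for each index and a root `⊤`, which is also the value of
`Finset.min ∅`: a maximal set hangs below the root, and points in no set are labelled by it. -/
noncomputable def parent (i : ι) : WithTop ι :=
  (Finset.univ.filter fun j => i < j ∧ A i ⊆ A j).min

noncomputable def edge (i : ι) : Sym2 (WithTop ι) := s(↑i, parent A i)

noncomputable def graph : SimpleGraph (WithTop ι) :=
  SimpleGraph.fromEdgeSet (Set.range (edge A))

noncomputable def label (x : α) : WithTop ι :=
  (Finset.univ.filter fun j => x ∈ A j).min

variable {A}

lemma lt_parent (i : ι) : (i : WithTop ι) < parent A i := by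
  rw [parent, Finset.min_eq_inf_withTop, Finset.lt_inf_iff (WithTop.coe_lt_top i)]
  intro j hj
  exact WithTop.coe_lt_coe.mpr (Finset.mem_filter.mp hj).2.1

lemma subset_of_parent_eq {i p : ι} (hp : parent A i = p) : A i ⊆ A p :=
  (Finset.mem_filter.mp (Finset.mem_of_min hp)).2.2

lemma exists_parent_eq (hA : SortedLaminar A) {i j : ι} (hij : i < j) (hsub : A i ⊆ A j) :
    ∃ p : ι, parent A i = p ∧ p ≤ j ∧ A p ⊆ A j := by
  have hj : j ∈ Finset.univ.filter fun k => i < k ∧ A i ⊆ A k := by simp [hij, hsub]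
  obtain ⟨p, hp⟩ := Finset.min_of_mem hj
  have hpj : p ≤ j := Finset.min_le_of_eq hj hp
  obtain ⟨x, hx⟩ := hA.nonempty i
  exact ⟨p, hp, hpj, hA.subset_of_le (subset_of_parent_eq hp hx) (hsub hx) hpj⟩

lemma exists_parent_eq_of_lt (hA : SortedLaminar A) {i j : ι} (hji : j < i)
    (hsub : A j ⊆ A i) : ∃ k, parent A k = i := by
  set S := Finset.univ.filter fun k => k < i ∧ A k ⊆ A i
  have hS : S.Nonempty := ⟨j, by simp [S, hji, hsub]⟩
  have hk : S.max' hS ∈ S := S.max'_mem hS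
  simp only [S, Finset.mem_filter, Finset.mem_univ, true_and] at hk
  obtain ⟨p, hp, hpi, hApi⟩ := hA.exists_parent_eq hk.1 hk.2
  refine ⟨S.max' hS, hp.trans (congrArg _ (hpi.eq_of_not_lt fun hpi' => ?_))⟩
  have hkp : S.max' hS < p := WithTop.coe_lt_coe.mp (hp ▸ lt_parent _)
  exact hkp.not_ge (S.le_max' p (by simp [S, hpi', hApi]))

lemma parent_mem_subtree_iff (hA : SortedLaminar A) {i j : ι} (hji : j ≠ i) :
    parent A j ∈ subtree A i ↔ (j : WithTop ι) ∈ subtree A i := by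
  rw [coe_mem_subtree]
  constructor
  · rintro ⟨p, hp, hpi, hApi⟩
    have hjp : j < p := WithTop.coe_lt_coe.mp (hp ▸ lt_parent j)
    exact ⟨hjp.le.trans hpi, (subset_of_parent_eq hp).trans hApi⟩
  · rintro ⟨hji', hsub⟩
    obtain ⟨p, hp, hpi, hApi⟩ := hA.exists_parent_eq (lt_of_le_of_ne hji' hji) hsub
    exact hp ▸ coe_mem_subtree.mpr ⟨hpi, hApi⟩

lemma label_mem_subtree_iff (hA : SortedLaminar A) {x : α} {i : ι} :
    label A x ∈ subtree A i ↔ x ∈ A i := by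
  constructor
  · rintro ⟨j, hj, -, hji⟩
    exact hji (Finset.mem_filter.mp (Finset.mem_of_min hj)).2
  · intro hx
    have hi : i ∈ Finset.univ.filter fun j => x ∈ A j := by simp [hx]
    obtain ⟨m, hm⟩ := Finset.min_of_mem hi
    have hmi : m ≤ i := Finset.min_le_of_eq hi hm
    have hxm : x ∈ A m := (Finset.mem_filter.mp (Finset.mem_of_min hm)).2
    rw [label, hm, coe_mem_subtree]
    exact ⟨hmi, hA.subset_of_le hxm hx hmi⟩

lemma edge_injective : Function.Injective (edge A) := by
  intro i j h
  rcases Sym2.eq_iff.mp h with ⟨h, -⟩ | ⟨hi, hj⟩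
  · exact WithTop.coe_injective h
  · exact absurd ((hj ▸ lt_parent i).trans (hi ▸ lt_parent j)) (lt_irrefl _)

lemma edgeSet_graph : (graph A).edgeSet = Set.range (edge A) := by
  rw [graph, SimpleGraph.edgeSet_fromEdgeSet, sdiff_eq_left, Set.disjoint_left]
  rintro _ ⟨i, rfl⟩
  exact (lt_parent i).ne

lemma graph_adj_parent (i : ι) : (graph A).Adj i (parent A i) := by
  rw [← SimpleGraph.mem_edgeSet, edgeSet_graph]
  exact ⟨i, rfl⟩

lemma graph_reachable_top (u : WithTop ι) : (graph A).Reachable u ⊤ := by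
  refine SimpleGraph.reachable_of_forall_exists_adj_gt (S := Set.univ) (fun u _ hu => ?_)
    (Set.mem_univ u)
  obtain ⟨i, rfl⟩ := WithTop.ne_top_iff_exists.mp hu
  exact ⟨parent A i, Set.mem_univ _, lt_parent i, graph_adj_parent i⟩

lemma graph_isTree : (graph A).IsTree := by
  rw [SimpleGraph.isTree_iff_connected_and_card, edgeSet_graph,
    Nat.card_range_of_injective edge_injective, Nat.card_eq_fintype_card,
    Nat.card_eq_fintype_card, SimpleGraph.connected_iff_exists_forall_reachable]
  exact ⟨⟨⊤, fun u => (graph_reachable_top u).symm⟩, Fintype.card_option.symm⟩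

lemma adj_deleteEdges_parent {i j : ι} (hji : j ≠ i) :
    ((graph A).deleteEdges {edge A i}).Adj j (parent A j) :=
  SimpleGraph.deleteEdges_adj.mpr ⟨graph_adj_parent j, fun h => hji (edge_injective h)⟩

lemma mem_subtree_iff_of_reachable_deleteEdges (hA : SortedLaminar A) {i : ι}
    {u v : WithTop ι} (h : ((graph A).deleteEdges {edge A i}).Reachable u v) :
    u ∈ subtree A i ↔ v ∈ subtree A i := by
  refine h.iff_of_forall_adj fun u v huv => ?_
  obtain ⟨huv, hne⟩ := SimpleGraph.deleteEdges_adj.mp huv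
  rw [← SimpleGraph.mem_edgeSet, edgeSet_graph] at huv
  obtain ⟨j, hj⟩ := huv
  have hji : j ≠ i := by rintro rfl; exact hne (hj ▸ rfl)
  rcases Sym2.eq_iff.mp hj with ⟨rfl, rfl⟩ | ⟨rfl, rfl⟩
  · exact (hA.parent_mem_subtree_iff hji).symm
  · exact hA.parent_mem_subtree_iff hji

lemma reachable_deleteEdges_of_mem_subtree (hA : SortedLaminar A) {i : ι} {u : WithTop ι}
    (hu : u ∈ subtree A i) : ((graph A).deleteEdges {edge A i}).Reachable u i := by
  refine SimpleGraph.reachable_of_forall_exists_adj_gt (fun u hu hui => ?_) hu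
  obtain ⟨j, rfl, -⟩ := id hu
  have hji : j ≠ i := fun h => hui (congrArg _ h)
  exact ⟨parent A j, (hA.parent_mem_subtree_iff hji).mpr hu, lt_parent j,
    adj_deleteEdges_parent hji⟩

lemma reachable_deleteEdges_top_of_notMem_subtree (hA : SortedLaminar A) {i : ι}
    {u : WithTop ι} (hu : u ∉ subtree A i) :
    ((graph A).deleteEdges {edge A i}).Reachable u ⊤ := by
  refine SimpleGraph.reachable_of_forall_exists_adj_gt (S := (subtree A i)ᶜ)
    (fun u hu hut => ?_) hu
  obtain ⟨j, rfl⟩ := WithTop.ne_top_iff_exists.mp hut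
  have hji : j ≠ i := by rintro rfl; exact hu (coe_mem_subtree.mpr ⟨le_rfl, subset_rfl⟩)
  exact ⟨parent A j, mt (hA.parent_mem_subtree_iff hji).mp hu, lt_parent j,
    adj_deleteEdges_parent hji⟩

lemma reachable_deleteEdges_iff (hA : SortedLaminar A) {i : ι} {u v : WithTop ι} :
    ((graph A).deleteEdges {edge A i}).Reachable u v ↔
      (u ∈ subtree A i ↔ v ∈ subtree A i) := by
  refine ⟨hA.mem_subtree_iff_of_reachable_deleteEdges, fun huv => ?_⟩
  by_cases hu : u ∈ subtree A i
  · exact (hA.reachable_deleteEdges_of_mem_subtree hu).trans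
      (hA.reachable_deleteEdges_of_mem_subtree (huv.mp hu)).symm
  · exact (hA.reachable_deleteEdges_top_of_notMem_subtree hu).trans
      (hA.reachable_deleteEdges_top_of_notMem_subtree (mt huv.mpr hu)).symm

lemma mem_range_label_of_existsUnique_adj (hA : SortedLaminar A) {r : α} (hr : ∀ i, r ∉ A i)
    (v : WithTop ι) (hv : ∃! w, (graph A).Adj v w) : v ∈ Set.range (label A) := by
  induction v using WithTop.recTopCoe with
  | top => exact ⟨r, Finset.min_eq_top.mpr (by simp [hr])⟩
  | coe i =>
    by_contra hi
    obtain ⟨x, hx⟩ := hA.nonempty i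
    obtain ⟨j, hj, hji, hsub⟩ := (hA.label_mem_subtree_iff (i := i)).mpr hx
    have hji : j < i := lt_of_le_of_ne hji (by rintro rfl; exact hi ⟨x, hj⟩)
    obtain ⟨k, hk⟩ := hA.exists_parent_eq_of_lt hji hsub
    have hki : (k : WithTop ι) = parent A i :=
      hv.unique (hk ▸ (graph_adj_parent k).symm) (graph_adj_parent i)
    exact (hki ▸ (lt_parent k).trans (hk ▸ lt_parent i)).false

end

variable {ι : Type} [Fintype ι] [LinearOrder ι] {A : ι → Finset X}

noncomputable abbrev toWeakXTree (hA : SortedLaminar A) {r : X} (hr : ∀ i, r ∉ A i) :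
    WeakXTree X where
  V := WithTop ι
  G := graph A
  isTree := graph_isTree
  lab := label A
  leaf_labelled := hA.mem_range_label_of_existsUnique_adj hr

lemma splitOf_toWeakXTree_edge (hA : SortedLaminar A) {r : X} (hr : ∀ i, r ∉ A i) (i : ι) :
    (hA.toWeakXTree hr).splitOf (edge A i) = {A i, (A i)ᶜ} := by
  have hside : ∀ u : WithTop ι,
      Finset.univ.filter (fun x => ((graph A).deleteEdges {edge A i}).Reachable u (label A x)) =
        if u ∈ subtree A i then A i else (A i)ᶜ := by
    intro u
    ext x
    by_cases hu : u ∈ subtree A i <;>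
      simp [hA.reachable_deleteEdges_iff, hA.label_mem_subtree_iff, hu]
  ext σ
  simp only [WeakXTree.splitOf, hside, Finset.mem_image, Finset.mem_univ, true_and,
    Finset.mem_insert, Finset.mem_singleton]
  constructor
  · rintro ⟨u, rfl⟩
    split_ifs <;> simp
  · rintro (rfl | rfl)
    · exact ⟨i, by simp⟩
    · exact ⟨⊤, by simp⟩

lemma splits_toWeakXTree (hA : SortedLaminar A) {r : X} (hr : ∀ i, r ∉ A i) :
    (hA.toWeakXTree hr).splits = Finset.univ.val.map fun i => {A i, (A i)ᶜ} := by
  have hedges :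
      (hA.toWeakXTree hr).G.edgeFinset = Finset.univ.map ⟨edge A, edge_injective⟩ := by
    ext e
    simp [edgeSet_graph]
  rw [WeakXTree.splits, hedges, Finset.map_val]
  exact (Multiset.map_map _ _ _).trans
    (Multiset.map_congr rfl fun i _ => hA.splitOf_toWeakXTree_edge hr i)

end SortedLaminar

theorem exists_weakXTree_splits_eq_map {M : Multiset (Finset X)} {r : X}
    (hM : ∀ B ∈ M, r ∉ B ∧ B.Nonempty)
    (hlam : ∀ B ∈ M, ∀ C ∈ M, B ⊆ C ∨ C ⊆ B ∨ Disjoint B C) :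
    ∃ T : WeakXTree X, T.splits = M.map fun B => {B, Bᶜ} := by
  set L := M.toList.mergeSort fun B C => B.card ≤ C.card
  have hL : (L : Multiset (Finset X)) = M := by
    rw [← M.coe_toList]
    exact Multiset.coe_eq_coe.mpr (List.mergeSort_perm _ _)
  have hmem : ∀ i, L.get i ∈ M := fun i => hL ▸ Multiset.mem_coe.mpr (L.get_mem i)
  have hsorted : L.Pairwise fun B C => B.card ≤ C.card := by
    simpa using List.pairwise_mergeSort (le := fun B C : Finset X => B.card ≤ C.card)
      (by simp only [decide_eq_true_eq]; omega)
      (by simp only [Bool.or_eq_true, decide_eq_true_eq]; omega) M.toList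
  have hA : SortedLaminar L.get :=
    { nonempty := fun i => (hM _ (hmem i)).2
      laminar := fun i j => hlam _ (hmem i) _ (hmem j)
      lt_of_ssubset := fun i j hij => lt_of_not_ge fun hji => by
        rcases hji.eq_or_lt with rfl | hji
        · exact hij.ne rfl
        · exact (hsorted.rel_get_of_lt hji).not_gt (Finset.card_lt_card hij) }
  refine ⟨hA.toWeakXTree fun i => (hM _ (hmem i)).1, ?_⟩
  rw [hA.splits_toWeakXTree, Fin.univ_val_map, List.ofFn_comp' L.get fun B => {B, Bᶜ},
    List.ofFn_get, ← Multiset.map_coe, hL]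

theorem exists_weakXTree_splits_eq_of_compatibleSystem [Nonempty X]
    {S : Multiset (Finset (Finset X))} (hS : IsSplitSystem S) (hC : CompatibleSystem S) :
    ∃ T : WeakXTree X, T.splits = S := by
  obtain ⟨r⟩ := ‹Nonempty X›
  obtain ⟨M, rfl, hM⟩ := Multiset.exists_map_eq_of_forall_mem fun σ hσ =>
    (hS σ hσ).exists_pair_compl_eq_notMem r
  refine exists_weakXTree_splits_eq_map hM fun B hB C hC' => ?_
  exact subset_or_subset_or_disjoint_of_splitsCompatible (hM B hB).1 (hM C hC').1
    (hC _ (Multiset.mem_map_of_mem _ hB) _ (Multiset.mem_map_of_mem _ hC'))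

/-- Splits-Equivalence, existence part: a split system on `X`
(`|X| ≥ 2`) is displayed by some weak X-tree iff it is compatible. -/
theorem stmt_0 {X : Type} [Fintype X] [DecidableEq X] (hX : 2 ≤ Fintype.card X)
    (S : Multiset (Finset (Finset X))) (hS : IsSplitSystem S) :
    (∃ T : WeakXTree X, T.splits = S) ↔ CompatibleSystem S := by
  have : Nonempty X := Fintype.card_pos_iff.mp (by omega)
  exact ⟨fun ⟨T, hT⟩ => hT ▸ T.compatibleSystem_splits,
    exists_weakXTree_splits_eq_of_compatibleSystem hS⟩
end

section
/- Let T = (T;φ) and T' = (T';φ') be weak X-trees on a finite set X with |X| ≥ 2 such that Σ(T) = Σ(T') as multisets. Then T and T' are isomorphic, i.e., there exists a bijection ψ : V(T) → V(T') inducing a graph isomorphism between T and T' such that φ'(x) = ψ(φ(x)) for all x ∈ X. -/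
open scoped Classical

variable {X : Type} [Fintype X] [DecidableEq X]

/-- Two weak X-trees are isomorphic if there is a bijection of their vertex sets
inducing a graph isomorphism and commuting with the labelling maps. -/
def WeakXTree.Isomorphic (T T' : WeakXTree X) : Prop :=
  ∃ ψ : T.V ≃ T'.V, (∀ u v : T.V, T.G.Adj u v ↔ T'.G.Adj (ψ u) (ψ v)) ∧
    ∀ x : X, T'.lab x = ψ (T.lab x)

/-!
Orient every edge `e` of a weak X-tree towards a vertex `v`: the orientation of `v` is the
multiset of the parts of the splits `σ_e` on the side of `v`. Orientations determine vertices,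
two vertices are adjacent exactly when their orientations differ by replacing one part `A`
by `X - A`, and the orientation of `φ x` is read off `Σ(T)` by taking in each split the part
containing `x`. So it suffices that the set of orientations depends on `Σ(T)` alone: it consists
of the ways of choosing one part of each split such that any two disjoint chosen parts are
complementary. To realise such a choice, pair it with the edges and walk from any vertex
towards an edge whose chosen part points away from it; after re-pairing two edges that display
the same split if necessary, each step lowers the number of edges on which the choice and the
orientation disagree.
-/

namespace SimpleGraph

variable {V : Type*} {G : SimpleGraph V}

theorem Connected.reachable_deleteEdges_left_or_right (hG : G.Connected) {a b : V} (hab : a ≠ b)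
    (w : V) :
    (G.deleteEdges {s(a, b)}).Reachable w a ∨ (G.deleteEdges {s(a, b)}).Reachable w b := by
  classical
  obtain ⟨p, hp⟩ := hG.exists_isPath w a
  by_cases hab_p : s(a, b) ∈ p.edges
  · have hb := p.snd_mem_support_of_mem_edges hab_p
    have ha := Walk.endpoint_notMem_support_takeUntil hp hb hab
    exact .inr (reachable_deleteEdges_iff_exists_walk.mpr
      ⟨p.takeUntil b hb, fun h => ha ((p.takeUntil b hb).fst_mem_support_of_mem_edges h)⟩)
  · exact .inl (reachable_deleteEdges_iff_exists_walk.mpr ⟨p, hab_p⟩)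

theorem Reachable.deleteEdges_of_not_reachable {e : Sym2 V} {u z a : V}
    (h : (G.deleteEdges {e}).Reachable u z) (ha : ¬ (G.deleteEdges {e}).Reachable u a) (b : V) :
    (G.deleteEdges {s(a, b)}).Reachable u z := by
  classical
  obtain ⟨W⟩ := h
  by_contra hz
  have hab : s(a, b) ∈ W.edges := W.mem_edges_of_not_reachable_deleteEdges fun h' =>
    hz (h'.mono (deleteEdges_mono (deleteEdges_le _)))
  exact ha ⟨W.takeUntil a (W.fst_mem_support_of_mem_edges hab)⟩

theorem IsBridge.reachable_deleteEdges_of_mem_edges {u c w z d₁ d₂ : V}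
    (hb : G.IsBridge s(u, c)) (q : G.Walk c w) (hu : u ∉ q.support) (hd : s(d₁, d₂) ∈ q.edges)
    (hz : (G.deleteEdges {s(u, c)}).Reachable u z) :
    (G.deleteEdges {s(d₁, d₂)}).Reachable u z := by
  classical
  refine hz.deleteEdges_of_not_reachable (fun hd₁ => isBridge_iff.mp hb ?_) d₂
  have hd₁q := q.fst_mem_support_of_mem_edges hd
  refine hd₁.trans (reachable_deleteEdges_iff_exists_walk.mpr
    ⟨q.takeUntil d₁ hd₁q, fun h => hu ?_⟩).symm
  exact q.support_takeUntil_subset_support hd₁q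
    ((q.takeUntil d₁ hd₁q).fst_mem_support_of_mem_edges h)

end SimpleGraph

namespace Multiset

theorem Rel.exists_map_eq {α β : Type*} [Nonempty α] {r : α → β → Prop}
    {s : Multiset α} {t : Multiset β} (h : Rel r s t) (ht : t.Nodup) :
    ∃ c : β → α, (∀ b ∈ t, r (c b) b) ∧ t.map c = s := by
  classical
  induction h with
  | zero => exact ⟨fun _ => Classical.arbitrary α, by simp, rfl⟩
  | @cons a b as bs hab _ ih =>
    obtain ⟨hb, hbs⟩ := nodup_cons.mp ht
    obtain ⟨c, hc, rfl⟩ := ih hbs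
    have hupd : ∀ b' ∈ bs, Function.update c b a b' = c b' := fun b' hb' =>
      Function.update_of_ne (ne_of_mem_of_not_mem hb' hb) _ _
    refine ⟨Function.update c b a, ?_, ?_⟩
    · simp only [mem_cons, forall_eq_or_imp, Function.update_self]
      exact ⟨hab, fun b' hb' => hupd b' hb' ▸ hc b' hb'⟩
    · rw [map_cons, Function.update_self, map_congr rfl hupd]

variable {α : Type*} [BooleanAlgebra α] {S : Multiset α}

theorem eq_zero_of_map_compl_eq_self (hS : ∀ B ∈ S, Bᶜ ∉ S) (h : S.map compl = S) :
    S = 0 :=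
  eq_zero_of_forall_notMem fun B hB =>
    hS B hB (h ▸ mem_map_of_mem compl hB)

theorem eq_singleton_of_add_compl_eq (hS : ∀ B ∈ S, Bᶜ ∉ S) {A : α} (hA : A ≠ Aᶜ)
    (h : S + {Aᶜ} = S.map compl + {A}) : S = {A} := by
  obtain ⟨S', rfl⟩ : ∃ S', S = A ::ₘ S' := by
    refine exists_cons_of_mem ?_
    have : A ∈ S + {Aᶜ} := h ▸ mem_add.mpr (.inr (mem_singleton_self A))
    simpa [hA] using this
  have hS' : S'.map compl = S' := by
    rw [map_cons, cons_add, cons_add, add_comm S', add_comm (S'.map compl), singleton_add,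
      singleton_add, cons_swap Aᶜ] at h
    exact ((cons_inj_right _).mp ((cons_inj_right _).mp h)).symm
  rw [eq_zero_of_map_compl_eq_self
    (fun B hB hBc => hS B (mem_cons_of_mem hB) (mem_cons_of_mem hBc)) hS']
  rfl

end Multiset

theorem Finset.map_val_comp_swap {α β : Type*} [DecidableEq α] {s : Finset α} {a b : α}
    (ha : a ∈ s) (hb : b ∈ s) (c : α → β) :
    s.val.map (c ∘ Equiv.swap a b) = s.val.map c := by
  have hperm : s.map (Equiv.swap a b).toEmbedding = s := Finset.map_perm fun x hx => by
    by_contra hxs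
    exact hx (Equiv.swap_apply_of_ne_of_ne (ne_of_mem_of_not_mem ha hxs).symm
      (ne_of_mem_of_not_mem hb hxs).symm)
  rw [← Multiset.map_map, ← Equiv.coe_toEmbedding, ← Finset.map_val, hperm]

def IsFlip {α : Type*} [BooleanAlgebra α] (M N : Multiset α) : Prop :=
  ∃ A, A ≠ Aᶜ ∧ N + {A} = M + {Aᶜ}

def partOf (x : X) (σ : Finset (Finset X)) : Finset X :=
  (σ.filter (x ∈ ·)).sup id

def IsCoherent {α : Type*} [BooleanAlgebra α] (M : Multiset α) : Prop :=
  ∀ A ∈ M, ∀ B ∈ M, Disjoint A B → B = Aᶜ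

namespace WeakXTree

open SimpleGraph

noncomputable def side (T : WeakXTree X) (v : T.V) (e : Sym2 T.V) : Finset X :=
  Finset.univ.filter fun x => (T.G.deleteEdges {e}).Reachable v (T.lab x)

variable {T : WeakXTree X}

theorem isBridge_of_adj {a b : T.V} (h : T.G.Adj a b) : T.G.IsBridge s(a, b) :=
  isAcyclic_iff_forall_adj_isBridge.mp T.isTree.isAcyclic h

theorem mem_side {v : T.V} {e : Sym2 T.V} {x : X} :
    x ∈ T.side v e ↔ (T.G.deleteEdges {e}).Reachable v (T.lab x) := by
  simp [side]

theorem splitOf_eq_image_side (e : Sym2 T.V) :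
    T.splitOf e = Finset.univ.image fun v => T.side v e := rfl

theorem side_eq_of_reachable {u w : T.V} {e : Sym2 T.V}
    (h : (T.G.deleteEdges {e}).Reachable u w) : T.side u e = T.side w e := by
  ext x
  simp only [mem_side]
  exact ⟨h.symm.trans, h.trans⟩

theorem side_eq_of_adj_of_ne {u v : T.V} (h : T.G.Adj u v) {f : Sym2 T.V} (hf : f ≠ s(u, v)) :
    T.side u f = T.side v f :=
  side_eq_of_reachable
    (deleteEdges_adj.mpr ⟨h, fun h' => hf (Set.mem_singleton_iff.mp h').symm⟩).reachable

theorem side_eq_compl_side_of_adj {a b : T.V} (h : T.G.Adj a b) :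
    T.side b s(a, b) = (T.side a s(a, b))ᶜ := by
  ext x
  rw [Finset.mem_compl, mem_side, mem_side]
  have hbr := isBridge_iff.mp (isBridge_of_adj h)
  constructor
  · exact fun hb ha => hbr (ha.trans hb.symm)
  · intro ha
    rcases T.isTree.connected.reachable_deleteEdges_left_or_right h.ne (T.lab x) with h' | h'
    · exact absurd h'.symm ha
    · exact h'.symm

theorem side_eq_or_eq_compl {e : Sym2 T.V} (he : e ∈ T.G.edgeSet) (u w : T.V) :
    T.side w e = T.side u e ∨ T.side w e = (T.side u e)ᶜ := by
  induction e using Sym2.ind with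
  | _ a b =>
  have hc := side_eq_compl_side_of_adj (T.G.mem_edgeSet.mp he)
  have hor := T.isTree.connected.reachable_deleteEdges_left_or_right (T.G.mem_edgeSet.mp he).ne
  rcases hor u with hu | hu <;> rcases hor w with hw | hw <;>
    simp [side_eq_of_reachable hu, side_eq_of_reachable hw, hc]

theorem exists_lab_reachable_deleteEdges {a b : T.V} (h : T.G.Adj a b) :
    ∃ x, (T.G.deleteEdges {s(a, b)}).Reachable a (T.lab x) := by
  induction hn : (Finset.univ.filter fun z => (T.G.deleteEdges {s(a, b)}).Reachable a z).card
    using Nat.strong_induction_on generalizing a b with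
  | _ n ih =>
  by_cases ha : a ∈ Set.range T.lab
  · obtain ⟨x, rfl⟩ := ha
    exact ⟨x, .rfl⟩
  obtain ⟨c, hac, hcb⟩ : ∃ c, T.G.Adj a c ∧ c ≠ b := by
    by_contra! hcon
    exact ha (T.leaf_labelled a ⟨b, h, hcon⟩)
  have hbr := isBridge_iff.mp (isBridge_of_adj hac.symm)
  have hac' : (T.G.deleteEdges {s(a, b)}).Adj a c :=
    deleteEdges_adj.mpr ⟨hac, by simp [hcb, h.ne]⟩
  have hsub : ∀ z, (T.G.deleteEdges {s(c, a)}).Reachable c z →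
      (T.G.deleteEdges {s(a, b)}).Reachable a z := fun z hz =>
    hac'.reachable.trans (hz.deleteEdges_of_not_reachable hbr b)
  have hlt : (Finset.univ.filter fun z => (T.G.deleteEdges {s(c, a)}).Reachable c z).card < n := by
    rw [← hn]
    refine Finset.card_lt_card
      ⟨fun z hz => by simpa using hsub z (by simpa using hz), fun hss => ?_⟩
    exact hbr (by simpa using hss (by simp : a ∈ Finset.univ.filter _))
  obtain ⟨x, hx⟩ := ih _ hlt hac.symm rfl
  exact ⟨x, hsub _ hx⟩

theorem side_nonempty {e : Sym2 T.V} (he : e ∈ T.G.edgeSet) (w : T.V) :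
    (T.side w e).Nonempty := by
  induction e using Sym2.ind with
  | _ a b =>
  have hab := T.G.mem_edgeSet.mp he
  rcases side_eq_or_eq_compl he a w with h | h
  · obtain ⟨x, hx⟩ := exists_lab_reachable_deleteEdges hab
    exact ⟨x, h ▸ mem_side.mpr hx⟩
  · obtain ⟨x, hx⟩ := exists_lab_reachable_deleteEdges hab.symm
    rw [h, ← side_eq_compl_side_of_adj hab, Sym2.eq_swap]
    exact ⟨x, mem_side.mpr hx⟩

theorem side_ne_compl {e : Sym2 T.V} (he : e ∈ T.G.edgeSet) (w : T.V) :
    T.side w e ≠ (T.side w e)ᶜ := fun h => by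
  obtain ⟨x, hx⟩ := side_nonempty he w
  exact Finset.mem_compl.mp (h ▸ hx) hx

theorem splitOf_eq_pair {e : Sym2 T.V} (he : e ∈ T.G.edgeSet) (w : T.V) :
    T.splitOf e = {T.side w e, (T.side w e)ᶜ} := by
  induction e using Sym2.ind with
  | _ a b =>
  have hab := T.G.mem_edgeSet.mp he
  ext C
  simp only [splitOf_eq_image_side, Finset.mem_image, Finset.mem_univ, true_and,
    Finset.mem_insert, Finset.mem_singleton]
  constructor
  · rintro ⟨u, rfl⟩
    rcases side_eq_or_eq_compl he w u with h | h
    · exact .inl h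
    · exact .inr h
  · rintro (rfl | rfl)
    · exact ⟨w, rfl⟩
    rcases side_eq_or_eq_compl he a w with h | h
    · exact ⟨b, by rw [h, side_eq_compl_side_of_adj hab]⟩
    · exact ⟨a, by rw [h, compl_compl]⟩

theorem compl_mem_splitOf {e : Sym2 T.V} (he : e ∈ T.G.edgeSet) {C : Finset X}
    (hC : C ∈ T.splitOf e) : Cᶜ ∈ T.splitOf e := by
  obtain ⟨u, -, rfl⟩ := Finset.mem_image.mp hC
  rw [splitOf_eq_pair he u]
  exact Finset.mem_insert_of_mem (Finset.mem_singleton_self _)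

theorem side_eq_compl_of_ne {e : Sym2 T.V} (he : e ∈ T.G.edgeSet) {C : Finset X}
    (hC : C ∈ T.splitOf e) {w : T.V} (hw : T.side w e ≠ C) : T.side w e = Cᶜ := by
  rw [splitOf_eq_pair he w] at hC
  rcases Finset.mem_insert.mp hC with rfl | hC
  · exact absurd rfl hw
  · rw [Finset.mem_singleton.mp hC, compl_compl]

theorem side_subset_side_of_mem_edges {u c w : T.V} (h : T.G.Adj u c) (q : T.G.Walk c w)
    (hu : u ∉ q.support) {f : Sym2 T.V} (hf : f ∈ q.edges) :
    T.side u s(u, c) ⊆ T.side u f := by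
  induction f using Sym2.ind with
  | _ d₁ d₂ =>
  intro x hx
  exact mem_side.mpr
    ((isBridge_of_adj h).reachable_deleteEdges_of_mem_edges q hu hf (mem_side.mp hx))

theorem side_eq_of_mem_edges {u c w : T.V} (h : T.G.Adj u c) {q : T.G.Walk c w}
    (hu : u ∉ q.support) {g : Sym2 T.V} (hg : g ∈ q.edges) : T.side u g = T.side c g :=
  side_eq_of_adj_of_ne h fun hg' => hu (q.fst_mem_support_of_mem_edges (hg' ▸ hg))

theorem not_disjoint_side_of_mem_edges {u w : T.V} {p : T.G.Walk u w} (hp : p.IsPath)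
    {e f : Sym2 T.V} (he : e ∈ p.edges) (hf : f ∈ p.edges) :
    ¬ Disjoint (T.side u e) (T.side u f) := by
  induction p with
  | nil => simp at he
  | @cons u c w h q ih =>
  obtain ⟨hq, hu⟩ := (Walk.cons_isPath_iff h q).mp hp
  have hfirst : ∀ g ∈ (Walk.cons h q).edges, T.side u s(u, c) ⊆ T.side u g := by
    simp only [Walk.edges_cons, List.mem_cons, forall_eq_or_imp, subset_rfl, true_and]
    exact fun g hg => side_subset_side_of_mem_edges h q hu hg
  have hne := side_nonempty (T.G.mem_edgeSet.mpr h) u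
  rw [Walk.edges_cons, List.mem_cons] at he hf
  rcases he with rfl | he
  · exact fun hd => hne.ne_empty (Finset.disjoint_self_iff_empty _ |>.mp
      (hd.mono subset_rfl (hfirst f (by simp [hf]))))
  rcases hf with rfl | hf
  · exact fun hd => hne.ne_empty (Finset.disjoint_self_iff_empty _ |>.mp
      (hd.mono (hfirst e (by simp [he])) subset_rfl))
  rw [side_eq_of_mem_edges h hu he, side_eq_of_mem_edges h hu hf]
  exact ih hq he hf

noncomputable def orientation (T : WeakXTree X) (v : T.V) : Multiset (Finset X) :=
  T.G.edgeFinset.val.map (T.side v)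

theorem orientation_add_of_adj {u v : T.V} (h : T.G.Adj u v) :
    T.orientation v + {T.side u s(u, v)} = T.orientation u + {(T.side u s(u, v))ᶜ} := by
  have hmem : s(u, v) ∈ T.G.edgeFinset.val := by simpa using h
  have hrest : ∀ f ∈ T.G.edgeFinset.val.erase s(u, v), T.side v f = T.side u f := fun f hf =>
    (side_eq_of_adj_of_ne h (T.G.edgeFinset.nodup.mem_erase_iff.mp hf).1).symm
  rw [orientation, orientation, ← Multiset.cons_erase hmem, Multiset.map_cons, Multiset.map_cons,
    Multiset.map_congr rfl hrest, side_eq_compl_side_of_adj h]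
  simp only [← Multiset.singleton_add]
  abel

theorem orientation_add_map_side {u w : T.V} {p : T.G.Walk u w} (hp : p.IsPath) :
    T.orientation w + (p.edges : Multiset (Sym2 T.V)).map (T.side u) =
      T.orientation u + ((p.edges : Multiset (Sym2 T.V)).map (T.side u)).map compl := by
  induction p with
  | nil => simp
  | @cons u c w h q ih =>
  obtain ⟨hq, hu⟩ := (Walk.cons_isPath_iff h q).mp hp
  have hq_eq := ih hq
  rw [Multiset.map_congr rfl fun g hg => (side_eq_of_mem_edges h hu (Multiset.mem_coe.mp hg)).symm]
    at hq_eq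
  simp only [Walk.edges_cons, ← Multiset.cons_coe, ← Multiset.singleton_add, Multiset.map_add,
    Multiset.map_singleton]
  rw [add_left_comm, hq_eq, ← add_assoc, add_comm {_} (T.orientation c), orientation_add_of_adj h,
    add_assoc]

theorem compl_notMem_map_side {u w : T.V} {p : T.G.Walk u w} (hp : p.IsPath) :
    ∀ B ∈ (p.edges : Multiset (Sym2 T.V)).map (T.side u),
      Bᶜ ∉ (p.edges : Multiset (Sym2 T.V)).map (T.side u) := by
  simp only [Multiset.mem_map, Multiset.mem_coe, forall_exists_index, and_imp,
    forall_apply_eq_imp_iff₂, not_exists, not_and]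
  exact fun e he f hf hfe =>
    not_disjoint_side_of_mem_edges hp he hf (hfe ▸ disjoint_compl_right)

theorem orientation_injective : Function.Injective T.orientation := by
  intro u v huv
  obtain ⟨p, hp⟩ := T.isTree.connected.exists_isPath u v
  have h := orientation_add_map_side hp
  rw [huv] at h
  have hS := Multiset.eq_zero_of_map_compl_eq_self (compl_notMem_map_side hp)
    (add_left_cancel h).symm
  exact Walk.eq_of_length_eq_zero (by simpa [← Walk.length_edges] using hS)

theorem adj_iff_isFlip {u v : T.V} :
    T.G.Adj u v ↔ IsFlip (T.orientation u) (T.orientation v) := by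
  refine ⟨fun h => ⟨_, side_ne_compl (T.G.mem_edgeSet.mpr h) u, orientation_add_of_adj h⟩, ?_⟩
  rintro ⟨A, hA, hflip⟩
  obtain ⟨p, hp⟩ := T.isTree.connected.exists_isPath u v
  set S := (p.edges : Multiset (Sym2 T.V)).map (T.side u)
  have hS : S + {Aᶜ} = S.map compl + {A} := add_left_cancel (a := T.orientation v) (by
    rw [← add_assoc, orientation_add_map_side hp, add_comm (S.map compl) {A}, ← add_assoc, hflip,
      add_right_comm])
  have hS_eq := Multiset.eq_singleton_of_add_compl_eq (compl_notMem_map_side hp) hA hS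
  exact Walk.adj_of_length_eq_one
    (by simpa [S, ← Walk.length_edges] using congrArg Multiset.card hS_eq)

theorem partOf_splitOf (x : X) {e : Sym2 T.V} (he : e ∈ T.G.edgeSet) :
    partOf x (T.splitOf e) = T.side (T.lab x) e := by
  have hx : x ∈ T.side (T.lab x) e := mem_side.mpr .rfl
  rw [splitOf_eq_pair he (T.lab x), partOf, Finset.filter_insert, if_pos hx,
    Finset.filter_singleton, if_neg (by simpa using hx)]
  simp

theorem orientation_lab (x : X) : T.orientation (T.lab x) = T.splits.map (partOf x) := by
  rw [splits, orientation, Multiset.map_map]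
  exact Multiset.map_congr rfl fun e he => (partOf_splitOf x (by simpa using he)).symm

theorem isCoherent_orientation (v : T.V) : IsCoherent (T.orientation v) := by
  simp only [IsCoherent, orientation, Multiset.mem_map, Finset.mem_val, mem_edgeFinset,
    forall_exists_index, and_imp, forall_apply_eq_imp_iff₂]
  intro e he f hf hdisj
  refine subset_antisymm (Finset.subset_compl_iff_disjoint_right.mpr hdisj.symm) fun x hx => ?_
  by_contra hxf
  obtain ⟨p, hp⟩ := T.isTree.connected.exists_isPath v (T.lab x)
  exact not_disjoint_side_of_mem_edges hp
    (p.mem_edges_of_not_reachable_deleteEdges (mem_side.not.mp (Finset.mem_compl.mp hx)))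
    (p.mem_edges_of_not_reachable_deleteEdges (mem_side.not.mp hxf)) hdisj

noncomputable def disagreements (T : WeakXTree X) (c : Sym2 T.V → Finset X) (w : T.V) :
    Finset (Sym2 T.V) :=
  T.G.edgeFinset.filter fun f => T.side w f ≠ c f

theorem disagreements_subset_erase_of_adj {c : Sym2 T.V → Finset X} {w u : T.V}
    (h : T.G.Adj w u) (hc : c s(w, u) ∈ T.splitOf s(w, u)) (hwu : T.side w s(w, u) ≠ c s(w, u)) :
    T.disagreements c u ⊆ (T.disagreements c w).erase s(w, u) := by
  have hu : T.side u s(w, u) = c s(w, u) := by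
    rw [side_eq_compl_side_of_adj h, side_eq_compl_of_ne (T.G.mem_edgeSet.mpr h) hc hwu,
      compl_compl]
  intro f hf
  simp only [disagreements, Finset.mem_filter, Finset.mem_erase] at hf ⊢
  have hfg : f ≠ s(w, u) := by
    rintro rfl
    exact hf.2 hu
  exact ⟨hfg, hf.1, side_eq_of_adj_of_ne h hfg ▸ hf.2⟩

theorem disagreements_swap_subset_erase {c : Sym2 T.V → Finset X} {w u : T.V}
    (h : T.G.Adj w u) {f₀ : Sym2 T.V} (hf₀ : f₀ ≠ s(w, u))
    (hu : T.side u s(w, u) = c f₀) (hw : T.side w f₀ = c s(w, u)) :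
    T.disagreements (c ∘ Equiv.swap s(w, u) f₀) u ⊆ (T.disagreements c w).erase f₀ := by
  intro f hf
  simp only [disagreements, Finset.mem_filter, Finset.mem_erase, Function.comp_apply] at hf ⊢
  obtain ⟨hfE, hfu⟩ := hf
  have hfg : f ≠ s(w, u) := by
    rintro rfl
    exact hfu (by rw [Equiv.swap_apply_left, hu])
  have hff₀ : f ≠ f₀ := by
    rintro rfl
    exact hfu (by rw [Equiv.swap_apply_right, ← side_eq_of_adj_of_ne h hf₀, hw])
  rw [Equiv.swap_apply_of_ne_of_ne hfg hff₀, ← side_eq_of_adj_of_ne h hfg] at hfu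
  exact ⟨hff₀, hfE, hfu⟩

theorem mem_splitOf_comp_swap {c : Sym2 T.V → Finset X}
    (hc : ∀ e ∈ T.G.edgeSet, c e ∈ T.splitOf e) {g f : Sym2 T.V} (hgf : c f = (c g)ᶜ) :
    ∀ e ∈ T.G.edgeSet, (c ∘ Equiv.swap g f) e ∈ T.splitOf e := by
  intro e he
  simp only [Function.comp_apply, Equiv.swap_apply_def]
  split_ifs with hg hf
  · subst hg
    exact hgf ▸ compl_mem_splitOf he (hc _ he)
  · subst hf
    exact compl_compl (c g) ▸ hgf ▸ compl_mem_splitOf he (hc _ he)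
  · exact hc e he

theorem exists_disagreements_ssubset {c : Sym2 T.V → Finset X}
    (hc : ∀ e ∈ T.G.edgeSet, c e ∈ T.splitOf e) (hcoh : IsCoherent (T.G.edgeFinset.val.map c))
    {w : T.V} {f₀ : Sym2 T.V} (hf₀ : f₀ ∈ T.disagreements c w) :
    ∃ u c', (∀ e ∈ T.G.edgeSet, c' e ∈ T.splitOf e) ∧
      T.G.edgeFinset.val.map c' = T.G.edgeFinset.val.map c ∧
      T.disagreements c' u ⊂ T.disagreements c w := by
  obtain ⟨hf₀E, hwf₀⟩ := Finset.mem_filter.mp hf₀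
  rw [mem_edgeFinset] at hf₀E
  obtain ⟨d, -, hd⟩ := Finset.mem_image.mp (hc f₀ hf₀E)
  have hsep : ¬ (T.G.deleteEdges {f₀}).Reachable w d := fun hr =>
    hwf₀ (by rw [side_eq_of_reachable hr]; exact hd)
  obtain ⟨p, hp⟩ := T.isTree.connected.exists_isPath w d
  have hf₀p := p.mem_edges_of_not_reachable_deleteEdges hsep
  cases p with
  | nil => simp at hf₀p
  | @cons _ u _ h q =>
  -- cross the first edge `s(w, u)` towards `f₀`, after swapping the choices on it and on `f₀`
  -- if it does not disagree yet
  rcases ne_or_eq (T.side w s(w, u)) (c s(w, u)) with hg | hg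
  · refine ⟨u, c, hc, rfl, (disagreements_subset_erase_of_adj h (hc _ h) hg).trans_ssubset
      (Finset.erase_ssubset (Finset.mem_filter.mpr ⟨by simpa using h, hg⟩))⟩
  have hf₀g : f₀ ≠ s(w, u) := by
    rintro rfl
    exact hwf₀ hg
  obtain ⟨hq, hw⟩ := (Walk.cons_isPath_iff h q).mp hp
  have hf₀q : f₀ ∈ q.edges := by simpa [hf₀g] using hf₀p
  have hwf₀' := side_eq_compl_of_ne hf₀E (hc f₀ hf₀E) hwf₀
  -- `f₀` lies beyond `s(w, u)` as seen from `w`, so `c f₀` and `c s(w, u)` are disjoint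
  have hcompl : c f₀ = (c s(w, u))ᶜ := by
    refine hcoh _ (Multiset.mem_map_of_mem c (by simpa using h)) _
      (Multiset.mem_map_of_mem c (by simpa using hf₀E)) ?_
    rw [← hg, ← compl_compl (c f₀), ← hwf₀']
    exact (side_subset_side_of_mem_edges h q hw hf₀q).disjoint_compl_right
  refine ⟨u, c ∘ Equiv.swap s(w, u) f₀, mem_splitOf_comp_swap hc hcompl, ?_,
    (disagreements_swap_subset_erase h hf₀g ?_ ?_).trans_ssubset (Finset.erase_ssubset hf₀)⟩
  · exact Finset.map_val_comp_swap (by simpa using h) (by simpa using hf₀E) c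
  · rw [side_eq_compl_side_of_adj h, hg, hcompl]
  · rw [hwf₀', hcompl, compl_compl]

theorem exists_orientation_eq_map {c : Sym2 T.V → Finset X}
    (hc : ∀ e ∈ T.G.edgeSet, c e ∈ T.splitOf e) (hcoh : IsCoherent (T.G.edgeFinset.val.map c)) :
    ∃ v, T.orientation v = T.G.edgeFinset.val.map c := by
  obtain ⟨w⟩ := T.isTree.connected.nonempty
  induction hn : (T.disagreements c w).card using Nat.strong_induction_on generalizing w c with
  | _ n ih =>
  obtain h | ⟨f₀, hf₀⟩ := (T.disagreements c w).eq_empty_or_nonempty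
  · refine ⟨w, Multiset.map_congr rfl fun f hf => ?_⟩
    by_contra hne
    exact Finset.notMem_empty f (h ▸ Finset.mem_filter.mpr ⟨hf, hne⟩)
  · obtain ⟨u, c', hc', hmap, hlt⟩ := exists_disagreements_ssubset hc hcoh hf₀
    rw [← hmap] at hcoh ⊢
    exact ih _ (hn ▸ Finset.card_lt_card hlt) hc' hcoh u rfl

theorem mem_range_orientation_iff {M : Multiset (Finset X)} :
    M ∈ Set.range T.orientation ↔ Multiset.Rel (· ∈ ·) M T.splits ∧ IsCoherent M := by
  constructor
  · rintro ⟨v, rfl⟩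
    refine ⟨?_, isCoherent_orientation v⟩
    rw [orientation, splits, Multiset.rel_map]
    exact Multiset.rel_refl_of_refl_on fun e _ => Finset.mem_image_of_mem _ (Finset.mem_univ v)
  · rintro ⟨hrel, hcoh⟩
    rw [splits, Multiset.rel_map_right] at hrel
    obtain ⟨c, hc, rfl⟩ := hrel.exists_map_eq T.G.edgeFinset.nodup
    exact exists_orientation_eq_map (fun e he => hc e (by simpa using he)) hcoh

end WeakXTree

theorem stmt_1_general {X : Type} [Fintype X] [DecidableEq X]
    (T T' : WeakXTree X) (h : T.splits = T'.splits) :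
    T.Isomorphic T' := by
  have hrange : Set.range T.orientation = Set.range T'.orientation := Set.ext fun M => by
    rw [WeakXTree.mem_range_orientation_iff, WeakXTree.mem_range_orientation_iff, h]
  let ψ : T.V ≃ T'.V := (Equiv.ofInjective _ WeakXTree.orientation_injective).trans
    ((Equiv.setCongr hrange).trans (Equiv.ofInjective _ WeakXTree.orientation_injective).symm)
  have hψ : ∀ v, T'.orientation (ψ v) = T.orientation v := fun v =>
    Equiv.apply_ofInjective_symm WeakXTree.orientation_injective _
  refine ⟨ψ, fun u v => ?_, fun x => WeakXTree.orientation_injective ?_⟩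
  · rw [WeakXTree.adj_iff_isFlip, WeakXTree.adj_iff_isFlip, hψ, hψ]
  · rw [hψ, WeakXTree.orientation_lab, WeakXTree.orientation_lab, h]

/-- Splits-Equivalence, uniqueness part: two weak X-trees with the
same multiset of displayed splits are isomorphic. -/
theorem stmt_1 {X : Type} [Fintype X] [DecidableEq X] (hX : 2 ≤ Fintype.card X)
    (T T' : WeakXTree X) (h : T.splits = T'.splits) :
    T.Isomorphic T' :=
  stmt_1_general T T' h
end

section
/- Let Π be a compatible partition system on X, let π ∈ Π, and let E_π be a subset of edges of T_Π = (T;φ) that displays π. Let V₁, V₂, …, V_k denote the vertex sets of the components of T_Π∖E_π. Then k = |π| + 1 and {φ⁻¹(V₁), φ⁻¹(V₂), …, φ⁻¹(V_k)} = π ∪ {∅}, i.e., exactly one component carries no labels and the label sets of the remaining components are precisely the parts of π. -/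
open scoped Classical

variable {X : Type} [Fintype X] [DecidableEq X]

/-!
Every edge of a tree is a bridge, and deleting a bridge creates exactly one new component, so
deleting the `|π|` edges of `E_π` leaves `|π| + 1` components. Two labels `x, y` lie in the same
component iff no edge `ξ(B)` separates them, i.e. iff `x ∈ B ↔ y ∈ B` for every part `B`, i.e. iff
they lie in the same part of `π`. Hence the labelled components carry exactly the parts of `π`,
and since there is one component more than there are parts, some component carries no label.
-/

namespace SimpleGraph

variable {V : Type*} {G : SimpleGraph V}

theorem reachable_deleteEdges_left_or_right_of_reachable {u a b : V} (h : G.Reachable u a) :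
    (G.deleteEdges {s(a, b)}).Reachable u a ∨ (G.deleteEdges {s(a, b)}).Reachable u b := by
  classical
  obtain ⟨p, hp⟩ := h.exists_isPath
  by_cases hab : s(a, b) ∈ p.edges
  · -- the part of `p` before `b` cannot contain `a`, hence not the edge `s(a, b)`
    have hb := p.snd_mem_support_of_mem_edges hab
    have ha := p.endpoint_notMem_support_takeUntil hp hb (G.ne_of_adj (p.adj_of_mem_edges hab))
    exact .inr ⟨(p.takeUntil b hb).toDeleteEdges _ fun e he hmem => ha <| by
      rw [Set.mem_singleton_iff.mp hmem] at he
      exact (p.takeUntil b hb).fst_mem_support_of_mem_edges he⟩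
  · exact .inl ⟨p.toDeleteEdges _ fun e he hmem => hab (Set.mem_singleton_iff.mp hmem ▸ he)⟩

theorem IsBridge.card_connectedComponent_deleteEdges [Finite V] {e : Sym2 V}
    (he : e ∈ G.edgeSet) (hbr : G.IsBridge e) :
    Nat.card (G.deleteEdges {e}).ConnectedComponent = Nat.card G.ConnectedComponent + 1 := by
  classical
  induction e with | h a b =>
  set G' := G.deleteEdges {s(a, b)}
  set f : G'.ConnectedComponent → G.ConnectedComponent :=
    ConnectedComponent.map (Hom.ofLE (G.deleteEdges_le _))
  have hab : G'.connectedComponentMk a ≠ G'.connectedComponentMk b :=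
    fun h => hbr (ConnectedComponent.exact h)
  have hsplit (u : V) (hu : G.Reachable u a) :
      G'.connectedComponentMk u = G'.connectedComponentMk a ∨
        G'.connectedComponentMk u = G'.connectedComponentMk b :=
    (reachable_deleteEdges_left_or_right_of_reachable hu).imp
      ConnectedComponent.sound ConnectedComponent.sound
  have hf : Set.BijOn f (Set.univ \ {G'.connectedComponentMk b}) Set.univ := by
    refine ⟨Set.mapsTo_univ _ _, ?_, ?_⟩
    · intro c hc d hd hcd
      induction c using ConnectedComponent.ind with | h u =>
      induction d using ConnectedComponent.ind with | h v =>
      have huv : G.Reachable u v := ConnectedComponent.exact hcd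
      by_contra hne
      obtain ⟨p, hp⟩ := huv.exists_isPath
      have hpab : s(a, b) ∈ p.edges :=
        p.mem_edges_of_not_reachable_deleteEdges fun h => hne (ConnectedComponent.sound h)
      have hua : G.Reachable u a := ⟨p.takeUntil a (p.fst_mem_support_of_mem_edges hpab)⟩
      have hva : G.Reachable v a := huv.symm.trans hua
      simp only [Set.mem_sdiff, Set.mem_singleton_iff] at hc hd
      exact hne (((hsplit u hua).resolve_right hc.2).trans ((hsplit v hva).resolve_right hd.2).symm)
    · rintro c -
      obtain ⟨c', rfl⟩ := ConnectedComponent.surjective_map_ofLE (G.deleteEdges_le {s(a, b)}) c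
      by_cases hc' : c' = G'.connectedComponentMk b
      · refine ⟨G'.connectedComponentMk a, ⟨trivial, hab⟩, ?_⟩
        subst hc'
        exact ConnectedComponent.sound (G.mem_edgeSet.mp he).reachable
      · exact ⟨c', ⟨trivial, hc'⟩, rfl⟩
  rw [← Set.ncard_univ, ← Set.ncard_univ, ← hf.ncard_eq,
    Set.ncard_sdiff_singleton_add_one (Set.mem_univ _)]

theorem IsAcyclic.card_connectedComponent_deleteEdges [Finite V] (hG : G.IsAcyclic)
    (E : Finset (Sym2 V)) (hE : ↑E ⊆ G.edgeSet) :
    Nat.card (G.deleteEdges ↑E).ConnectedComponent = Nat.card G.ConnectedComponent + E.card := by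
  classical
  induction E using Finset.induction_on with
  | empty => simp
  | @insert e E he ih =>
    have heG : e ∈ G.edgeSet := hE (by simp)
    have he' : e ∈ (G.deleteEdges ↑E).edgeSet := by simp [heG, he]
    have hbr : (G.deleteEdges ↑E).IsBridge e :=
      (isAcyclic_iff_forall_isBridge.mp hG heG).anti (G.deleteEdges_le _)
    rw [Finset.coe_insert, Set.insert_eq, Set.union_comm, ← deleteEdges_deleteEdges,
      hbr.card_connectedComponent_deleteEdges he', ih ((Finset.coe_subset.mpr
        (Finset.subset_insert e E)).trans hE), Finset.card_insert_of_notMem he]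
    ring

theorem IsTree.card_connectedComponent_deleteEdges [Finite V] (hG : G.IsTree)
    (E : Finset (Sym2 V)) (hE : ↑E ⊆ G.edgeSet) :
    Nat.card (G.deleteEdges ↑E).ConnectedComponent = E.card + 1 := by
  have := hG.connected.preconnected.subsingleton_connectedComponent
  have : Nonempty G.ConnectedComponent := hG.connected.nonempty.map G.connectedComponentMk
  rw [hG.isAcyclic.card_connectedComponent_deleteEdges E hE, Nat.card_unique, add_comm]

theorem IsTree.reachable_deleteEdges_iff (hG : G.IsTree) {s : Set (Sym2 V)} {u v : V} :
    (G.deleteEdges s).Reachable u v ↔ ∀ e ∈ s, (G.deleteEdges {e}).Reachable u v := by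
  classical
  refine ⟨fun h e he => h.mono (deleteEdges_anti (by simpa using he)), fun h => ?_⟩
  by_contra hs
  obtain ⟨p, hp⟩ := hG.connected.exists_isPath u v
  obtain ⟨e, he, hep⟩ := p.exists_mem_edges_of_not_reachable_deleteEdges hs
  obtain ⟨q⟩ := h e he
  -- the path `p` is the bypass of any walk from `u` to `v`, in particular of one avoiding `e`
  have hpq : (q.mapLe (G.deleteEdges_le _)).bypass = p :=
    (hG.existsUnique_path u v).unique (Walk.bypass_isPath _) hp
  have heq : e ∈ q.edges := by
    rw [← Walk.edges_mapLe_eq_edges (G.deleteEdges_le _)]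
    exact Walk.edges_bypass_subset_edges _ (hpq ▸ hep)
  simpa using q.edges_subset_edgeSet heq

end SimpleGraph

theorem IsPartition.eq_of_mem {α : Type} [Fintype α] {π : Finset (Finset α)} (hπ : IsPartition π)
    {A B : Finset α} (hA : A ∈ π) (hB : B ∈ π) {x : α} (hxA : x ∈ A) (hxB : x ∈ B) : A = B :=
  (hπ.2 x).unique ⟨hA, hxA⟩ ⟨hB, hxB⟩

theorem IsPartition.forall_mem_iff_mem {α : Type} [Fintype α] {π : Finset (Finset α)}
    (hπ : IsPartition π) {A : Finset α} (hA : A ∈ π) {x : α} (hx : x ∈ A) (y : α) :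
    (∀ B ∈ π, (x ∈ B ↔ y ∈ B)) ↔ y ∈ A := by
  refine ⟨fun h => (h A hA).mp hx, fun hy B hB => ⟨fun hxB => ?_, fun hyB => ?_⟩⟩
  · rwa [← hπ.eq_of_mem hA hB hx hxB]
  · rwa [← hπ.eq_of_mem hA hB hy hyB]

namespace WeakXTree

variable (T : WeakXTree X)

theorem reachable_deleteEdges_iff_of_splitOf_eq {e : Sym2 T.V} {A : Finset X}
    (hA : T.splitOf e = {A, Aᶜ}) (x y : X) :
    (T.G.deleteEdges {e}).Reachable (T.lab x) (T.lab y) ↔ (x ∈ A ↔ y ∈ A) := by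
  set S := Finset.univ.filter fun z => (T.G.deleteEdges {e}).Reachable (T.lab x) (T.lab z)
  have hS : S ∈ ({A, Aᶜ} : Finset (Finset X)) :=
    hA ▸ Finset.mem_image_of_mem _ (Finset.mem_univ _)
  have hxS : x ∈ S := by simp [S]
  have hyS : (T.G.deleteEdges {e}).Reachable (T.lab x) (T.lab y) ↔ y ∈ S := by simp [S]
  rw [hyS]
  rcases Finset.mem_insert.mp hS with h | h <;> simp_all

noncomputable def componentLabels (H : SimpleGraph T.V) (c : H.ConnectedComponent) : Finset X :=
  Finset.univ.filter fun x => H.connectedComponentMk (T.lab x) = c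

variable {T}

@[simp]
theorem mem_componentLabels {H : SimpleGraph T.V} {c : H.ConnectedComponent} {x : X} :
    x ∈ T.componentLabels H c ↔ H.connectedComponentMk (T.lab x) = c := by
  simp [componentLabels]

theorem componentLabels_injOn (H : SimpleGraph T.V) :
    Set.InjOn (T.componentLabels H) {c | (T.componentLabels H c).Nonempty} := by
  rintro c ⟨x, hx⟩ d - hcd
  have hx' : x ∈ T.componentLabels H d := hcd ▸ hx
  exact (mem_componentLabels.mp hx).symm.trans (mem_componentLabels.mp hx')

section Displays

variable {E : Finset (Sym2 T.V)} {π : Finset (Finset X)}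

theorem Displays.card_connectedComponent (hE : T.Displays E π) :
    Nat.card (T.G.deleteEdges ↑E).ConnectedComponent = π.card + 1 := by
  obtain ⟨hET, ξ, hξ, -⟩ := hE
  rw [T.isTree.card_connectedComponent_deleteEdges E hET, hξ.finsetCard_eq ξ]

theorem Displays.componentLabels_mk (hE : T.Displays E π) (hπ : IsPartition π) {A : Finset X}
    (hA : A ∈ π) {x : X} (hx : x ∈ A) :
    T.componentLabels (T.G.deleteEdges ↑E) ((T.G.deleteEdges ↑E).connectedComponentMk (T.lab x))
      = A := by
  obtain ⟨-, ξ, hξ, hsplit⟩ := hE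
  ext y
  rw [mem_componentLabels, ← hπ.forall_mem_iff_mem hA hx y, eq_comm,
    SimpleGraph.ConnectedComponent.eq, T.isTree.reachable_deleteEdges_iff]
  refine ⟨fun h B hB => ?_, fun h e he => ?_⟩
  · exact (T.reachable_deleteEdges_iff_of_splitOf_eq (hsplit B hB) x y).mp (h _ (hξ.mapsTo hB))
  · obtain ⟨B, hB, rfl⟩ := hξ.surjOn he
    exact (T.reachable_deleteEdges_iff_of_splitOf_eq (hsplit B hB) x y).mpr (h B hB)

theorem Displays.componentLabels_mem (hE : T.Displays E π) (hπ : IsPartition π)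
    {c : (T.G.deleteEdges ↑E).ConnectedComponent} (hc : (T.componentLabels _ c).Nonempty) :
    T.componentLabels _ c ∈ π := by
  obtain ⟨x, hx⟩ := hc
  obtain ⟨A, ⟨hA, hxA⟩, -⟩ := hπ.2 x
  rwa [← mem_componentLabels.mp hx, hE.componentLabels_mk hπ hA hxA]

theorem Displays.exists_componentLabels_eq_empty (hE : T.Displays E π) (hπ : IsPartition π) :
    ∃ c, T.componentLabels (T.G.deleteEdges ↑E) c = ∅ := by
  by_contra! hne
  have hle := Finset.card_le_card_of_injOn (s := Finset.univ) _
    (fun c _ => hE.componentLabels_mem hπ (hne c))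
    ((componentLabels_injOn _).mono fun c _ => hne c)
  rw [Finset.card_univ, ← Nat.card_eq_fintype_card, hE.card_connectedComponent] at hle
  omega

theorem Displays.range_componentLabels (hE : T.Displays E π) (hπ : IsPartition π) :
    Set.range (T.componentLabels (T.G.deleteEdges ↑E)) = insert ∅ ↑π := by
  refine Set.Subset.antisymm ?_ ?_
  · rintro _ ⟨c, rfl⟩
    obtain hc | hc := (T.componentLabels _ c).eq_empty_or_nonempty
    · exact .inl hc
    · exact .inr (hE.componentLabels_mem hπ hc)
  · rintro S (rfl | hS)
    · exact hE.exists_componentLabels_eq_empty hπ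
    · obtain ⟨x, hx⟩ := hπ.1 S hS
      exact ⟨_, hE.componentLabels_mk hπ hS hx⟩

end Displays

end WeakXTree

theorem stmt_3_general {X : Type} [Fintype X] [DecidableEq X]
    (P : Multiset (Finset (Finset X))) (hP : IsPartitionSystem P)
    (T : WeakXTree X)
    (π : Finset (Finset X)) (hπ : π ∈ P)
    (E : Finset (Sym2 T.V)) (hE : T.Displays E π) :
    Nat.card (T.G.deleteEdges (↑E : Set (Sym2 T.V))).ConnectedComponent = π.card + 1 ∧
    Set.range (fun c : (T.G.deleteEdges (↑E : Set (Sym2 T.V))).ConnectedComponent =>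
        Finset.univ.filter (fun x : X =>
          (T.G.deleteEdges (↑E : Set (Sym2 T.V))).connectedComponentMk (T.lab x) = c))
      = insert (∅ : Finset X) (↑π : Set (Finset X)) := by
  have hπP : IsPartition π := (hP π hπ).1
  exact ⟨hE.card_connectedComponent, hE.range_componentLabels hπP⟩

/-- if `E_π` displays `π ∈ Π` in `T_Π`, then `T_Π ∖ E_π` has exactly
`|π| + 1` components and the label sets of the components are exactly
`π ∪ {∅}`. -/
theorem stmt_3 {X : Type} [Fintype X] [DecidableEq X] (hX : 2 ≤ Fintype.card X)
    (P : Multiset (Finset (Finset X))) (hP : IsPartitionSystem P)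
    (hcomp : CompatibleSystem (systemSplits P))
    (T : WeakXTree X) (hT : T.splits = systemSplits P)
    (π : Finset (Finset X)) (hπ : π ∈ P)
    (E : Finset (Sym2 T.V)) (hE : T.Displays E π) :
    Nat.card (T.G.deleteEdges (↑E : Set (Sym2 T.V))).ConnectedComponent = π.card + 1 ∧
    Set.range (fun c : (T.G.deleteEdges (↑E : Set (Sym2 T.V))).ConnectedComponent =>
        Finset.univ.filter (fun x : X =>
          (T.G.deleteEdges (↑E : Set (Sym2 T.V))).connectedComponentMk (T.lab x) = c))
      = insert (∅ : Finset X) (↑π : Set (Finset X)) :=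
  stmt_3_general P hP T π hπ E hE
end

section
/- Let Π be a compatible partition system on X, let π ∈ Π, and let E_π be a subset of edges of T_Π = (T;φ) that displays π. Then for every pair of labelled vertices u and v of T_Π, the path in T_Π joining u and v contains exactly 0 or exactly 2 edges of E_π. -/
open scoped Classical

variable {X : Type} [Fintype X] [DecidableEq X]

/-!
Let `ξ` be the bijection from the parts of `π` onto `E_π`. Since paths in a tree are unique,
the edge `ξ A` lies on the path from `φ(x)` to `φ(y)` exactly when deleting it separates
`φ(x)` from `φ(y)`, i.e. when `A` separates `x` from `y`. The parts of a partition separating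
`x` from `y` are none if `x` and `y` share a part, and otherwise the two parts containing them.
-/

open Finset

theorem SimpleGraph.IsAcyclic.reachable_deleteEdges_iff_notMem_edges {V : Type}
    {G : SimpleGraph V} (hG : G.IsAcyclic) {u v : V} {p : G.Walk u v} (hp : p.IsPath)
    (e : Sym2 V) : (G.deleteEdges {e}).Reachable u v ↔ e ∉ p.edges := by
  induction e using Sym2.ind with
  | _ a b =>
  rw [reachable_deleteEdges_iff_exists_walk]
  refine ⟨fun ⟨q, hq⟩ hp_mem => hq ?_, fun h => ⟨p, h⟩⟩
  have hpq : p = q.bypass :=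
    congrArg Subtype.val ((hG.subsingleton_path u v).elim ⟨p, hp⟩ ⟨_, q.bypass_isPath⟩)
  exact q.edges_bypass_subset_edges (hpq ▸ hp_mem)

theorem IsPartition.card_filter_separating_eq_zero_or_two {X : Type} [DecidableEq X]
    {π : Finset (Finset X)} (hπ : IsPartition π) (x y : X) :
    #(π.filter fun A => ¬(x ∈ A ↔ y ∈ A)) = 0 ∨
      #(π.filter fun A => ¬(x ∈ A ↔ y ∈ A)) = 2 := by
  obtain ⟨Ax, ⟨hAx, hxAx⟩, hAx_uniq⟩ := hπ.2 x
  obtain ⟨Ay, ⟨hAy, hyAy⟩, hAy_uniq⟩ := hπ.2 y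
  have hmem_iff : ∀ z Az, z ∈ Az → (∀ A, A ∈ π ∧ z ∈ A → A = Az) →
      ∀ A ∈ π, (z ∈ A ↔ A = Az) :=
    fun z Az hz huniq A hA => ⟨fun h => huniq A ⟨hA, h⟩, fun h => h ▸ hz⟩
  have hfilter : (π.filter fun A => ¬(x ∈ A ↔ y ∈ A)) =
      π.filter fun A => ¬(A = Ax ↔ A = Ay) :=
    filter_congr fun A hA => by
      rw [hmem_iff x Ax hxAx hAx_uniq A hA, hmem_iff y Ay hyAy hAy_uniq A hA]
  rw [hfilter]
  by_cases hxy : Ax = Ay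
  · left
    simp [hxy]
  · right
    have hpair : (π.filter fun A => ¬(A = Ax ↔ A = Ay)) = {Ax, Ay} := by
      ext A
      simp only [mem_filter, mem_insert, mem_singleton]
      constructor
      · rintro ⟨-, hA⟩
        tauto
      · rintro (rfl | rfl)
        · exact ⟨hAx, by simpa using hxy⟩
        · exact ⟨hAy, by simpa using Ne.symm hxy⟩
    rw [hpair, card_pair hxy]

namespace WeakXTree

theorem reachable_deleteEdges_lab_iff (T : WeakXTree X) {e : Sym2 T.V} {A : Finset X}
    (hsplit : T.splitOf e = {A, Aᶜ}) (x y : X) :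
    (T.G.deleteEdges {e}).Reachable (T.lab x) (T.lab y) ↔ (x ∈ A ↔ y ∈ A) := by
  set S := univ.filter fun t => (T.G.deleteEdges {e}).Reachable (T.lab x) (T.lab t) with hS
  have hS_mem : S ∈ ({A, Aᶜ} : Finset (Finset X)) := hsplit ▸ mem_image_of_mem _ (mem_univ _)
  have hx : x ∈ S := by simp [hS]
  have hy : y ∈ S ↔ (T.G.deleteEdges {e}).Reachable (T.lab x) (T.lab y) := by simp [hS]
  rw [← hy]
  rcases mem_insert.mp hS_mem with hSA | hSA
  · rw [hSA] at hx ⊢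
    simp [hx]
  · rw [mem_singleton.mp hSA] at hx ⊢
    rw [mem_compl] at hx ⊢
    simp [hx]

theorem Displays.countP_edges_eq_card_filter_separating {T : WeakXTree X}
    {E : Finset (Sym2 T.V)} {π : Finset (Finset X)} (hE : T.Displays E π) (x y : X)
    {p : T.G.Walk (T.lab x) (T.lab y)} (hp : p.IsPath) :
    p.edges.countP (fun f => decide (f ∈ E)) = #(π.filter fun A => ¬(x ∈ A ↔ y ∈ A)) := by
  obtain ⟨-, ξ, hξ, hξ_split⟩ := hE
  have hmem_edges : ∀ A ∈ π, ξ A ∈ p.edges ↔ ¬(x ∈ A ↔ y ∈ A) := fun A hA => by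
    rw [← T.reachable_deleteEdges_lab_iff (hξ_split A hA),
      T.isTree.isAcyclic.reachable_deleteEdges_iff_notMem_edges hp, not_not]
  rw [← hp.edges_nodup.card_eq_countP, eq_comm]
  refine card_nbij ξ (fun A hA => ?_) (hξ.injOn.mono (coe_subset.mpr (filter_subset _ _)))
    (fun f hf => ?_)
  · obtain ⟨hAπ, hA⟩ := mem_filter.mp hA
    exact mem_filter.mpr ⟨List.mem_toFinset.mpr ((hmem_edges A hAπ).mpr hA), hξ.mapsTo hAπ⟩
  · obtain ⟨hf_edges, hfE⟩ := mem_filter.mp hf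
    obtain ⟨A, hAπ, rfl⟩ := hξ.surjOn hfE
    exact ⟨A, mem_filter.mpr ⟨hAπ, (hmem_edges A hAπ).mp (List.mem_toFinset.mp hf_edges)⟩,
      rfl⟩

end WeakXTree

theorem stmt_4_general {X : Type} [Fintype X] [DecidableEq X]
    (P : Multiset (Finset (Finset X))) (hP : IsPartitionSystem P)
    (T : WeakXTree X)
    (π : Finset (Finset X)) (hπ : π ∈ P)
    (E : Finset (Sym2 T.V)) (hE : T.Displays E π) :
    ∀ (u v : T.V), u ∈ Set.range T.lab → v ∈ Set.range T.lab →
      ∀ p : T.G.Walk u v, p.IsPath →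
        p.edges.countP (fun f => decide (f ∈ E)) = 0 ∨
        p.edges.countP (fun f => decide (f ∈ E)) = 2 := by
  rintro _ _ ⟨x, rfl⟩ ⟨y, rfl⟩ p hp
  rw [hE.countP_edges_eq_card_filter_separating x y hp]
  exact (hP π hπ).1.card_filter_separating_eq_zero_or_two x y

/-- if `E_π` displays `π ∈ Π` in `T_Π`, then the path joining any
two labelled vertices contains exactly `0` or exactly `2` edges of `E_π`. -/
theorem stmt_4 {X : Type} [Fintype X] [DecidableEq X] (hX : 2 ≤ Fintype.card X)
    (P : Multiset (Finset (Finset X))) (hP : IsPartitionSystem P)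
    (hcomp : CompatibleSystem (systemSplits P))
    (T : WeakXTree X) (hT : T.splits = systemSplits P)
    (π : Finset (Finset X)) (hπ : π ∈ P)
    (E : Finset (Sym2 T.V)) (hE : T.Displays E π) :
    ∀ (u v : T.V), u ∈ Set.range T.lab → v ∈ Set.range T.lab →
      ∀ p : T.G.Walk u v, p.IsPath →
        p.edges.countP (fun f => decide (f ∈ E)) = 0 ∨
        p.edges.countP (fun f => decide (f ∈ E)) = 2 :=
  stmt_4_general P hP T π hπ E hE
end

section
/- Let Σ be a compatible split system on X and let Π be any partition system on X with Σ_Π = Σ. Then Δ(T_Σ) ≤ 2|Π|, where Δ(T_Σ) is the diameter of the tree T_Σ and |Π| is the total size of the multiset Π. -/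
open scoped Classical

variable {X : Type} [Fintype X] [DecidableEq X]

/-!
Every edge `e` on the path between two leaves `φ(x)` and `φ(y)` of a tree displays a split
separating `x` from `y`: the side of `φ(x)` in `T ∖ e` cannot contain `φ(y)`, as paths in a tree
are unique. So the distance is at most the number of splits of `Σ` separating `x` from `y`. A
split `{A, X − A}` coming from a partition `π` separates `x` from `y` only if `A` is the part of
`π` containing `x` or the part containing `y`, so each `π ∈ Π` contributes at most two of them.
-/

open SimpleGraph

def Separates {α : Type*} (x y : α) (σ : Finset (Finset α)) : Prop :=
  ∃ C ∈ σ, x ∈ C ∧ y ∉ C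

theorem SimpleGraph.IsAcyclic.not_reachable_deleteEdges_of_mem_edges {V : Type*}
    {G : SimpleGraph V} (hG : G.IsAcyclic) {u v : V} (p : G.Path u v) {e : Sym2 V}
    (he : e ∈ p.1.edges) : ¬ (G.deleteEdges {e}).Reachable u v := by
  rintro ⟨q⟩
  let q' : G.Path u v := ⟨q.toPath.1.mapLe (G.deleteEdges_le _), q.toPath.2.mapLe _⟩
  have hq' : e ∈ q.toPath.1.edges := by
    rwa [(hG.subsingleton_path u v).elim p q', Walk.edges_mapLe_eq_edges] at he
  simpa using q.toPath.1.edges_subset_edgeSet hq'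

namespace WeakXTree

theorem separates_splitOf_of_mem_edges (T : WeakXTree X) {x y : X}
    (p : T.G.Path (T.lab x) (T.lab y)) {e : Sym2 T.V} (he : e ∈ p.1.edges) :
    Separates x y (T.splitOf e) :=
  ⟨_, Finset.mem_image_of_mem _ (Finset.mem_univ (T.lab x)), by simp,
    by simpa using T.isTree.isAcyclic.not_reachable_deleteEdges_of_mem_edges p he⟩

theorem dist_lab_le_card_filter_separates (T : WeakXTree X) (x y : X) :
    T.G.dist (T.lab x) (T.lab y) ≤ Multiset.card (T.splits.filter (Separates x y)) := by
  obtain ⟨w⟩ := T.isTree.connected.preconnected (T.lab x) (T.lab y)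
  let p := w.toPath
  have hsub : p.1.edges.toFinset ⊆ T.G.edgeFinset := fun e he => by
    simpa using p.1.edges_subset_edgeSet (List.mem_toFinset.1 he)
  have hsep : ∀ σ ∈ p.1.edges.toFinset.val.map T.splitOf, Separates x y σ := by
    simp only [Multiset.mem_map, Finset.mem_val, List.mem_toFinset]
    rintro _ ⟨e, he, rfl⟩
    exact T.separates_splitOf_of_mem_edges p he
  calc T.G.dist (T.lab x) (T.lab y) ≤ p.1.length := dist_le p.1
    _ = p.1.edges.toFinset.card := by
      rw [List.toFinset_card_of_nodup p.2.isTrail.edges_nodup, Walk.length_edges]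
    _ = Multiset.card ((p.1.edges.toFinset.val.map T.splitOf).filter (Separates x y)) := by
      rw [Multiset.filter_eq_self.2 hsep, Multiset.card_map, Finset.card_val]
    _ ≤ Multiset.card (T.splits.filter (Separates x y)) :=
      Multiset.card_le_card <| Multiset.filter_le_filter _ <|
        Multiset.map_le_map (Finset.val_le_iff.2 hsub)

end WeakXTree

theorem card_filter_separates_partitionSplits_le_two (x y : X) {π : Finset (Finset X)}
    (hπ : IsPartition π) :
    Multiset.card ((partitionSplits π).filter (Separates x y)) ≤ 2 := by
  obtain ⟨Ax, -, hAx⟩ := hπ.2 x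
  obtain ⟨Ay, -, hAy⟩ := hπ.2 y
  have hsub : π.filter (fun A => Separates x y {A, Aᶜ}) ⊆ {Ax, Ay} := by
    intro A hA
    obtain ⟨hAπ, C, hC, hxC, hyC⟩ := Finset.mem_filter.1 hA
    rcases Finset.mem_insert.1 hC with rfl | hC
    · simp [hAx C ⟨hAπ, hxC⟩]
    · rw [Finset.mem_singleton.1 hC, Finset.mem_compl, not_not] at hyC
      simp [hAy A ⟨hAπ, hyC⟩]
  rw [partitionSplits, Multiset.filter_map, Multiset.card_map, ← Finset.filter_val]
  exact (Finset.card_le_card hsub).trans Finset.card_le_two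

theorem card_filter_separates_systemSplits_le (x y : X) {P : Multiset (Finset (Finset X))}
    (hP : ∀ π ∈ P, IsPartition π) :
    Multiset.card ((systemSplits P).filter (Separates x y)) ≤ 2 * Multiset.card P := by
  rw [systemSplits, Multiset.filter_bind, Multiset.card_bind, mul_comm,
    ← smul_eq_mul, ← Multiset.sum_replicate, ← Multiset.map_const']
  exact Multiset.sum_map_le_sum_map _ _ fun π hπ =>
    card_filter_separates_partitionSplits_le_two x y (hP π hπ)

theorem stmt_5_general {X : Type} [Fintype X] [DecidableEq X]
    (S : Multiset (Finset (Finset X)))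
    (T : WeakXTree X) (hT : T.splits = S)
    (P : Multiset (Finset (Finset X))) (hP : IsPartitionSystem P)
    (hPS : systemSplits P = S) :
    ∀ u v : T.V, T.IsLeaf u → T.IsLeaf v → T.G.dist u v ≤ 2 * Multiset.card P := by
  intro u v hu hv
  obtain ⟨x, rfl⟩ := T.leaf_labelled u hu
  obtain ⟨y, rfl⟩ := T.leaf_labelled v hv
  calc T.G.dist (T.lab x) (T.lab y)
      ≤ Multiset.card (T.splits.filter (Separates x y)) := T.dist_lab_le_card_filter_separates x y
    _ = Multiset.card ((systemSplits P).filter (Separates x y)) := by rw [hT, hPS]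
    _ ≤ 2 * Multiset.card P :=
      card_filter_separates_systemSplits_le x y fun π hπ => (hP π hπ).1

/-- for a compatible split system `Σ` and any partition system `Π`
with `Σ_Π = Σ`, the diameter of `T_Σ` (the largest distance between two leaves)
is at most `2|Π|`. -/
theorem stmt_5 {X : Type} [Fintype X] [DecidableEq X] (hX : 2 ≤ Fintype.card X)
    (S : Multiset (Finset (Finset X))) (hS : IsSplitSystem S)
    (hcomp : CompatibleSystem S)
    (T : WeakXTree X) (hT : T.splits = S)
    (P : Multiset (Finset (Finset X))) (hP : IsPartitionSystem P)
    (hPS : systemSplits P = S) :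
    ∀ u v : T.V, T.IsLeaf u → T.IsLeaf v → T.G.dist u v ≤ 2 * Multiset.card P :=
  stmt_5_general S T hT P hP hPS
end

section
/- Let T be a finite tree with at least two leaves, and suppose the vertex set of T is 2-coloured with colours 'odd' and 'even' (so adjacent vertices receive different colours). Then the number of vertices coloured odd is at least the number of interior (non-leaf) vertices coloured even plus one. -/
open scoped Classical

variable {X : Type} [Fintype X] [DecidableEq X]

/-!
Root the tree at an odd vertex `r` and send every vertex `u ≠ r` to its parent, the neighbour of
`u` on the path from `r`. An interior vertex has two neighbours, at most one of which is its own
parent, so it is the parent of some neighbour; for an even interior vertex that child is odd, and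
it is not `r` since the root is its own parent. Hence the even interior vertices lie in the image
of the odd vertices other than `r`.
-/

namespace SimpleGraph.IsTree

variable {V : Type*} {G : SimpleGraph V} (hG : G.IsTree)

noncomputable def parent (r v : V) : V :=
  (hG.existsUnique_path r v).choose.penultimate

lemma parent_eq_penultimate {r v : V} {p : G.Walk r v} (hp : p.IsPath) :
    hG.parent r v = p.penultimate := by
  rw [parent, ← (hG.existsUnique_path r v).choose_spec.2 p hp]

lemma parent_self (r : V) : hG.parent r r = r :=
  hG.parent_eq_penultimate Walk.IsPath.nil

lemma parent_eq_or_parent_eq_of_adj (r : V) {v w : V} (h : G.Adj v w) :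
    hG.parent r w = v ∨ hG.parent r v = w := by
  obtain ⟨p, hp, -⟩ := hG.existsUnique_path r v
  obtain ⟨q, hq, -⟩ := hG.existsUnique_path r w
  by_cases hv : v ∈ q.support
  · left
    rw [hG.parent_eq_penultimate hq, hG.isAcyclic.path_concat hp hq h hv, Walk.penultimate_concat]
  · right
    have hw := hG.isAcyclic.mem_support_of_ne_mem_support_of_adj_of_isPath hp hq h hv
    rw [hG.parent_eq_penultimate hp, hG.isAcyclic.path_concat hq hp h.symm hw,
      Walk.penultimate_concat]

lemma exists_adj_parent_eq (r : V) {v w₁ w₂ : V} (h₁ : G.Adj v w₁) (h₂ : G.Adj v w₂)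
    (hne : w₁ ≠ w₂) : ∃ u, G.Adj v u ∧ hG.parent r u = v := by
  rcases hG.parent_eq_or_parent_eq_of_adj r h₁ with h | h₁'
  · exact ⟨w₁, h₁, h⟩
  rcases hG.parent_eq_or_parent_eq_of_adj r h₂ with h | h₂'
  · exact ⟨w₂, h₂, h⟩
  exact absurd (h₁'.symm.trans h₂') hne

end SimpleGraph.IsTree

/-- in any 2-coloured finite tree with at least two leaves, the
number of vertices coloured odd (`true`) is at least the number of interior
vertices coloured even (`false`) plus one. -/
theorem stmt_11 {V : Type} [Fintype V] [DecidableEq V] (G : SimpleGraph V)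
    (hT : G.IsTree)
    (hleaves : ∃ u v : V, u ≠ v ∧ (∃! w : V, G.Adj u w) ∧ (∃! w : V, G.Adj v w))
    (c : V → Bool) (hc : ∀ u v : V, G.Adj u v → c u ≠ c v) :
    (Finset.univ.filter (fun v : V =>
        ¬ (∃! w : V, G.Adj v w) ∧ c v = false)).card + 1 ≤
      (Finset.univ.filter (fun v : V => c v = true)).card := by
  obtain ⟨a, b, hab, -, -⟩ := hleaves
  have : Nontrivial V := ⟨a, b, hab⟩
  have hadj := hT.connected.preconnected.exists_adj_of_nontrivial
  obtain ⟨r, hr⟩ : ∃ r, c r = true := by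
    obtain ⟨w, hw⟩ := hadj a
    cases ha : c a
    · exact ⟨w, by simpa [ha] using hc a w hw⟩
    · exact ⟨a, ha⟩
  set O := Finset.univ.filter (fun v : V => c v = true)
  have hsub : Finset.univ.filter (fun v : V => ¬ (∃! w : V, G.Adj v w) ∧ c v = false) ⊆
      (O.erase r).image (hT.parent r) := by
    intro v hv
    obtain ⟨hinterior, hveven⟩ := (Finset.mem_filter.mp hv).2
    obtain ⟨w₁, h₁⟩ := hadj v
    obtain ⟨w₂, h₂, hne⟩ : ∃ w₂, G.Adj v w₂ ∧ w₂ ≠ w₁ := by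
      by_contra! h
      exact hinterior ⟨w₁, h₁, h⟩
    obtain ⟨u, hvu, rfl⟩ := hT.exists_adj_parent_eq r h₁ h₂ hne.symm
    have hu : c u = true := by simpa [hveven] using (hc _ _ hvu).symm
    refine Finset.mem_image_of_mem _ (Finset.mem_erase.mpr ⟨?_, by simpa [O] using hu⟩)
    rintro rfl
    simp [hT.parent_self, hr] at hveven
  calc _ ≤ (O.erase r).card + 1 := by grw [hsub, Finset.card_image_le]
    _ = O.card := Finset.card_erase_add_one (by simpa [O] using hr)
end
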